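/- arXiv:1504.06160 — 3 statements merged into one kernel-verified Lean document; each statement's English description precedes it below -/
import Mathlib

section
/- Let A be a k-algebra with a Nakayama automorphism μ (i.e., Ext^d_{A^e}(A, A^e) ≅ the twisted bimodule ^1A^μ as left A^e-modules, and Ext^i vanishes for i ≠ d). Then μ(z) = z for every central element z of A. -/
/-!
For central `z ∈ A`, the element `c = z ⊗ 1 - 1 ⊗ zᵒᵖ` is central in `Aᵉ` and annihilates `A`.
Right multiplications by `z ⊗ 1` and by `1 ⊗ zᵒᵖ` on `Aᵉ` differ by left multiplication by `c`,
i.e. by the component at `Aᵉ` of an element of the center of the category of `Aᵉ`-modules that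
vanishes on `A`. Such an element acts by zero on `Ext(A, -)`, since on a projective resolution of
`A` it gives a chain map lifting `0`. Hence both right multiplications act in the same way on
`Extᵈ(A, Aᵉ) ≅ ¹A^μ`, where they act by `m ↦ m μ(z)` and `m ↦ z m` respectively; at `m = 1` this
gives `μ z = z`.
-/

open CategoryTheory TensorProduct

namespace CategoryTheory

variable {C D : Type*} [Category C] [Category D] [Abelian C] [EnoughProjectives C]
  [Abelian D]

theorem NatTrans.leftDerived_add {F G : C ⥤ D} [F.Additive] [G.Additive] (α β : F ⟶ G)
    (n : ℕ) :
    NatTrans.leftDerived (α + β) n = NatTrans.leftDerived α n + NatTrans.leftDerived β n := by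
  ext X
  let P := ProjectiveResolution.of X
  have : (NatTrans.mapHomologicalComplex (α + β) (ComplexShape.down ℕ)).app P.complex =
      (NatTrans.mapHomologicalComplex α _).app P.complex +
        (NatTrans.mapHomologicalComplex β _).app P.complex := by
    ext i
    rfl
  simp only [NatTrans.app_add, ProjectiveResolution.leftDerived_app_eq _ P, this,
    Functor.map_add, Preadditive.add_comp, Preadditive.comp_add]

theorem NatTrans.leftDerived_app_eq_map_of_app_eq {F : C ⥤ D} [F.Additive] (z : CatCenter C)
    (α : F ⟶ F) (hα : ∀ X, α.app X = F.map (z.app X)) (n : ℕ) (X : C) :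
    (NatTrans.leftDerived α n).app X = (F.leftDerived n).map (z.app X) := by
  let P := ProjectiveResolution.of X
  let γ : P.complex ⟶ P.complex := (NatTrans.mapHomologicalComplex z _).app P.complex
  rw [ProjectiveResolution.leftDerived_app_eq _ P, F.leftDerived_map_eq n _ γ]
  · congr 3
    ext i
    exact hα _
  · ext
    rw [HomologicalComplex.comp_f, HomologicalComplex.comp_f, ChainComplex.single₀_map_f_zero]
    exact (z.naturality (P.π.f 0)).symm

theorem Functor.leftDerived_map_zero (F : C ⥤ D) [F.Additive] (n : ℕ) (X Y : C) :
    (F.leftDerived n).map (0 : X ⟶ Y) = 0 := by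
  rw [F.leftDerived_map_eq n 0 (P := ProjectiveResolution.of X) (Q := ProjectiveResolution.of Y) 0
    (by simp)]
  simp only [Functor.comp_map, Functor.map_zero, Limits.zero_comp, Limits.comp_zero]

variable {R : Type*} [Ring R] [Linear R C]

instance (M : Cᵒᵖ) (n : ℕ) : ((Ext R C n).obj M).Additive where
  map_add {N N'} f g := by
    have : ((linearYoneda R C).map (f + g)).rightOp =
        ((linearYoneda R C).map f).rightOp + ((linearYoneda R C).map g).rightOp := by
      ext X
      apply Quiver.Hom.unop_inj
      ext u
      exact Preadditive.comp_add _ _ _ _ _ _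
    change ((NatTrans.leftDerived ((linearYoneda R C).map (f + g)).rightOp n).app M.unop).unop =
      ((NatTrans.leftDerived ((linearYoneda R C).map f).rightOp n).app M.unop).unop +
        ((NatTrans.leftDerived ((linearYoneda R C).map g).rightOp n).app M.unop).unop
    rw [this, NatTrans.leftDerived_add, NatTrans.app_add, unop_add]

theorem Ext_map_app_eq_zero (z : CatCenter C) {M : C} (hM : z.app M = 0) (N : C) (n : ℕ) :
    ((Ext R C n).obj (Opposite.op M)).map (z.app N) = 0 := by
  have hα : ∀ X, ((linearYoneda R C).map (z.app N)).rightOp.app X =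
      ((linearYoneda R C).obj N).rightOp.map (z.app X) := fun X =>
    Quiver.Hom.unop_inj (by ext u; exact z.naturality u)
  change ((NatTrans.leftDerived ((linearYoneda R C).map (z.app N)).rightOp n).app M).unop = 0
  rw [NatTrans.leftDerived_app_eq_map_of_app_eq z _ hα, hM, Functor.leftDerived_map_zero, Limits.unop_zero]

end CategoryTheory

theorem ModuleCat.Ext_map_eq_of_sub_eq_smul {k R : Type*} [Field k] [Ring R] [Algebra k R]
    {c : R} (hc : c ∈ Subring.center R) {M : ModuleCat R} (hM : ∀ m : M, c • m = 0)
    {N : ModuleCat R} (f g : N ⟶ N) (hfg : ∀ x, f x = g x + c • x) (n : ℕ) :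
    ((Ext k (ModuleCat R) n).obj (Opposite.op M)).map f =
      ((Ext k (ModuleCat R) n).obj (Opposite.op M)).map g := by
  open ModuleCat.Algebra in
  let z := Linear.toCatCenter (Subring.center R) (ModuleCat R) ⟨c, hc⟩
  have hzM : z.app M = 0 := by
    ext m
    exact hM m
  have hfg' : f = g + z.app N := by
    ext x
    exact hfg x
  rw [hfg', Functor.map_add, Ext_map_app_eq_zero z hzM, add_zero]

/-- let `A` be a `k`-algebra with a Nakayama automorphism `μ`, i.e. there is `d`
with `Ext^d_{A^e}(A, A^e) ≅ ¹A^μ` as left `A^e`-modules and `Ext^i_{A^e}(A, A^e) = 0` for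
`i ≠ d`.  Here `A^e = A ⊗[k] Aᵐᵒᵖ`, `A` is an `A^e`-module via `(a ⊗ bᵒᵖ) • m = a m b`, the
`A^e`-module structure on `Ext` is induced functorially by right multiplications of `A^e` on
itself, and the twisted module `¹A^μ` has action `(a ⊗ bᵒᵖ) • m = a · m · μ b`.  Then
`μ z = z` for every central element `z` of `A`. -/
theorem stmt0 (k : Type) [Field k] (A : Type) [Ring A] [Algebra k A]
    (μ : A ≃ₐ[k] A) (d : ℕ) :
    letI : Module (A ⊗[k] Aᵐᵒᵖ) A := TensorProduct.Algebra.module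
    ∀ (e : (((Ext k (ModuleCat (A ⊗[k] Aᵐᵒᵖ)) d).obj
          (Opposite.op (ModuleCat.of (A ⊗[k] Aᵐᵒᵖ) A))).obj
          (ModuleCat.of (A ⊗[k] Aᵐᵒᵖ) (A ⊗[k] Aᵐᵒᵖ))) ≃ₗ[k] A),
      (∀ (a b : A)
        (f : ModuleCat.of (A ⊗[k] Aᵐᵒᵖ) (A ⊗[k] Aᵐᵒᵖ) ⟶
          ModuleCat.of (A ⊗[k] Aᵐᵒᵖ) (A ⊗[k] Aᵐᵒᵖ)),
        (∀ x : A ⊗[k] Aᵐᵒᵖ, f x = x * (a ⊗ₜ[k] MulOpposite.op b)) →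
          ∀ ξ, e ((((Ext k (ModuleCat (A ⊗[k] Aᵐᵒᵖ)) d).obj
              (Opposite.op (ModuleCat.of (A ⊗[k] Aᵐᵒᵖ) A))).map f) ξ) = b * e ξ * μ a) →
      (∀ i : ℕ, i ≠ d →
        Subsingleton (((Ext k (ModuleCat (A ⊗[k] Aᵐᵒᵖ)) i).obj
          (Opposite.op (ModuleCat.of (A ⊗[k] Aᵐᵒᵖ) A))).obj
          (ModuleCat.of (A ⊗[k] Aᵐᵒᵖ) (A ⊗[k] Aᵐᵒᵖ)))) →
      ∀ z : A, (∀ y : A, z * y = y * z) → μ z = z := by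
  let : Module (A ⊗[k] Aᵐᵒᵖ) A := TensorProduct.Algebra.module
  intro e hμ _ z hz
  let rightMul (x : A ⊗[k] Aᵐᵒᵖ) : ModuleCat.of (A ⊗[k] Aᵐᵒᵖ) (A ⊗[k] Aᵐᵒᵖ) ⟶
      ModuleCat.of (A ⊗[k] Aᵐᵒᵖ) (A ⊗[k] Aᵐᵒᵖ) :=
    ModuleCat.ofHom (LinearMap.toSpanSingleton _ _ x)
  have hzA : z ∈ Set.center A := Semigroup.mem_center_iff.mpr fun y => (hz y).symm
  set c : A ⊗[k] Aᵐᵒᵖ := z ⊗ₜ MulOpposite.op 1 - 1 ⊗ₜ MulOpposite.op z with hc_def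
  have hc : c ∈ Subring.center (A ⊗[k] Aᵐᵒᵖ) :=
    Subalgebra.sub_mem _ (Algebra.TensorProduct.includeLeft_map_center_le k A Aᵐᵒᵖ ⟨z, hzA, rfl⟩)
      (Algebra.TensorProduct.includeRight_map_center_le k A Aᵐᵒᵖ
        ⟨MulOpposite.op z, MulOpposite.op_mem_center_iff.mpr hzA, rfl⟩)
  have hcA : ∀ m : A, c • m = 0 := fun m => by
    simp [c, sub_smul, TensorProduct.Algebra.smul_def, hz]
  have hrightMul : ∀ x, rightMul (z ⊗ₜ MulOpposite.op 1) x =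
      rightMul (1 ⊗ₜ MulOpposite.op z) x + c • x := fun x => by
    change x * _ = x * _ + c * x
    rw [← Subring.mem_center_iff.mp hc x, ← mul_add, hc_def, add_sub_cancel]
  have hleft := hμ z 1 (rightMul _) (fun _ => rfl) (e.symm 1)
  have hright := hμ 1 z (rightMul _) (fun _ => rfl) (e.symm 1)
  rw [ModuleCat.Ext_map_eq_of_sub_eq_smul hc hcA _ _ hrightMul d, hright,
    e.apply_symm_apply] at hleft
  simpa using hleft.symm
end

section
/- In the homogenization H of U = k⟨x₁,x₂⟩/(x₁x₂ − qx₂x₁ + ax₁ + bx₂ + c), namely H = k⟨x₁,x₂,t⟩/(x₁x₂ − qx₂x₁ + ax₁t + bx₂t + ct², x₁t − tx₁, x₂t − tx₂), the element t is central, and the assignment x₁ ↦ qx₁ − bt, x₂ ↦ q⁻¹x₂ + q⁻¹at, t ↦ t extends to a graded algebra automorphism of H. -/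
/-- The defining relations of the homogenization
`H = k⟨x₁,x₂,t⟩/(x₁x₂ − qx₂x₁ + ax₁t + bx₂t + ct², x₁t − tx₁, x₂t − tx₂)`,
with generators `x₁ = ι 0`, `x₂ = ι 1`, `t = ι 2`. -/
def qPlaneHomogRel (k : Type*) [Field k] (q a b c : k) :
    FreeAlgebra k (Fin 3) → FreeAlgebra k (Fin 3) → Prop := fun u v =>
  (u = FreeAlgebra.ι k 0 * FreeAlgebra.ι k 1 - q • (FreeAlgebra.ι k 1 * FreeAlgebra.ι k 0) +
        a • (FreeAlgebra.ι k 0 * FreeAlgebra.ι k 2) + b • (FreeAlgebra.ι k 1 * FreeAlgebra.ι k 2) +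
        c • (FreeAlgebra.ι k 2 * FreeAlgebra.ι k 2) ∧ v = 0) ∨
  (u = FreeAlgebra.ι k 0 * FreeAlgebra.ι k 2 - FreeAlgebra.ι k 2 * FreeAlgebra.ι k 0 ∧ v = 0) ∨
  (u = FreeAlgebra.ι k 1 * FreeAlgebra.ι k 2 - FreeAlgebra.ι k 2 * FreeAlgebra.ι k 1 ∧ v = 0)

/-- The degree-`n` graded piece of `H`: the image of the span of length-`n` words. -/
noncomputable def qPlaneHomogPiece (k : Type*) [Field k] (q a b c : k) (n : ℕ) :
    Submodule k (RingQuot (qPlaneHomogRel k q a b c)) :=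
  Submodule.map (RingQuot.mkAlgHom k (qPlaneHomogRel k q a b c)).toLinearMap
    ((Submodule.span k (Set.range (FreeAlgebra.ι k : Fin 3 → FreeAlgebra k (Fin 3)))) ^ n)

/-! Since `t` commutes with `x₁` and `x₂`, it is central. Substituting `x₁ ↦ qx₁ − bt`,
`x₂ ↦ q⁻¹x₂ + q⁻¹at`, `t ↦ t` into the relator `x₁x₂ − qx₂x₁ + ax₁t + bx₂t + ct²` gives back the
relator itself: the quadratic part is scaled by `q · q⁻¹ = 1`, and the new `x₁t`, `x₂t`, `t²`
terms cancel. The same holds for the inverse substitution `x₁ ↦ q⁻¹x₁ + q⁻¹bt`, `x₂ ↦ qx₂ − at`,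
so both descend to mutually inverse endomorphisms of `H`. They preserve the graded pieces because
they send generators to linear combinations of generators. -/

namespace QPlaneHomog

section Relator

theorem smul_inv_smul_add_sub_cancel {K M : Type*} [DivisionRing K] [AddCommGroup M] [Module K M]
    {q : K} (hq : q ≠ 0) (b : K) (x y : M) : q • (q⁻¹ • x + (q⁻¹ * b) • y) - b • y = x := by
  rw [smul_add, smul_smul, smul_smul, ← mul_assoc, mul_inv_cancel₀ hq, one_smul, one_mul,
    add_sub_cancel_right]

theorem inv_smul_smul_sub_add_cancel {K M : Type*} [DivisionRing K] [AddCommGroup M] [Module K M]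
    {q : K} (hq : q ≠ 0) (b : K) (x y : M) : q⁻¹ • (q • x - b • y) + (q⁻¹ * b) • y = x := by
  rw [smul_sub, smul_smul, smul_smul, inv_mul_cancel₀ hq, one_smul, sub_add_cancel]

variable {k A : Type*} [Field k] [Ring A] [Algebra k A]

def relator (q a b c : k) (X Y T : A) : A :=
  X * Y - q • (Y * X) + a • (X * T) + b • (Y * T) + c • (T * T)

variable {q : k} (a b c : k) {X Y T : A}

theorem relator_subst (hq : q ≠ 0) (hXT : Commute X T) (hYT : Commute Y T) :
    relator q a b c (q • X - b • T) (q⁻¹ • Y + (q⁻¹ * a) • T) T = relator q a b c X Y T := by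
  simp only [relator, mul_add, add_mul, sub_mul, mul_sub, smul_mul_assoc, mul_smul_comm,
    smul_smul, smul_add, smul_sub, hXT.symm.eq, hYT.symm.eq]
  match_scalars <;> field_simp <;> ring

-- The forward substitution undoes the inverse one, so this is `relator_subst` read backwards.
theorem relator_subst_inv (hq : q ≠ 0) (hXT : Commute X T) (hYT : Commute Y T) :
    relator q a b c (q⁻¹ • X + (q⁻¹ * b) • T) (q • Y - a • T) T = relator q a b c X Y T := by
  rw [← relator_subst a b c hq (((hXT.smul_left _).add_left (.smul_left (.refl T) _)))
    ((hYT.smul_left _).sub_left (.smul_left (.refl T) _)), smul_inv_smul_add_sub_cancel hq,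
    inv_smul_smul_sub_add_cancel hq]

end Relator

variable {k : Type*} [Field k] {q a b c : k}

local notation "H" => RingQuot (qPlaneHomogRel k q a b c)

variable (q a b c) in
def gen (i : Fin 3) : H := RingQuot.mkAlgHom k _ (FreeAlgebra.ι k i)

local notation "x₁" => gen q a b c 0
local notation "x₂" => gen q a b c 1
local notation "t" => gen q a b c 2

theorem relator_gen : relator q a b c x₁ x₂ t = 0 := by
  have h := RingQuot.mkAlgHom_rel k (s := qPlaneHomogRel k q a b c) (Or.inl ⟨rfl, rfl⟩)
  simpa only [relator, gen, map_add, map_sub, map_smul, map_mul, map_zero] using h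

theorem commute_x₁_t : Commute x₁ t := by
  have h := RingQuot.mkAlgHom_rel k (s := qPlaneHomogRel k q a b c) (Or.inr (Or.inl ⟨rfl, rfl⟩))
  simpa only [Commute, SemiconjBy, gen, map_sub, map_mul, map_zero, sub_eq_zero] using h

theorem commute_x₂_t : Commute x₂ t := by
  have h := RingQuot.mkAlgHom_rel k (s := qPlaneHomogRel k q a b c) (Or.inr (Or.inr ⟨rfl, rfl⟩))
  simpa only [Commute, SemiconjBy, gen, map_sub, map_mul, map_zero, sub_eq_zero] using h

theorem adjoin_range_gen : Algebra.adjoin k (Set.range (gen q a b c)) = ⊤ := by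
  rw [show gen q a b c = fun i ↦ RingQuot.mkAlgHom k _ (FreeAlgebra.ι k i) from rfl,
    Set.range_comp', ← AlgHom.map_adjoin, FreeAlgebra.adjoin_range_ι, Algebra.map_top,
    AlgHom.range_eq_top]
  exact RingQuot.mkAlgHom_surjective k _

theorem commute_t (h : H) : Commute t h := by
  refine Algebra.commute_of_mem_adjoin_of_forall_mem_commute
    (adjoin_range_gen (q := q) (a := a) (b := b) (c := c) ▸ Algebra.mem_top) ?_
  rintro _ ⟨i, rfl⟩
  fin_cases i
  · exact commute_x₁_t.symm
  · exact commute_x₂_t.symm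
  · exact .refl _

section Lift

variable {A : Type*} [Ring A] [Algebra k A]

theorem hom_ext {f g : H →ₐ[k] A} (h₁ : f x₁ = g x₁) (h₂ : f x₂ = g x₂) (ht : f t = g t) :
    f = g :=
  AlgHom.ext_of_adjoin_eq_top adjoin_range_gen <| by
    rintro _ ⟨i, rfl⟩
    fin_cases i <;> assumption

variable (X Y T : A) (hXT : Commute X T) (hYT : Commute Y T) (hr : relator q a b c X Y T = 0)

def lift : H →ₐ[k] A :=
  RingQuot.liftAlgHom k ⟨FreeAlgebra.lift k ![X, Y, T], by
    rintro _ _ (⟨rfl, rfl⟩ | ⟨rfl, rfl⟩ | ⟨rfl, rfl⟩) <;>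
      simp only [map_add, map_sub, map_smul, map_mul, map_zero, FreeAlgebra.lift_ι_apply]
    · exact hr
    · exact sub_eq_zero.2 hXT.eq
    · exact sub_eq_zero.2 hYT.eq⟩

@[simp] theorem lift_x₁ : lift X Y T hXT hYT hr x₁ = X := by
  rw [lift, gen, RingQuot.liftAlgHom_mkAlgHom_apply]
  exact FreeAlgebra.lift_ι_apply _ _

@[simp] theorem lift_x₂ : lift X Y T hXT hYT hr x₂ = Y := by
  rw [lift, gen, RingQuot.liftAlgHom_mkAlgHom_apply]
  exact FreeAlgebra.lift_ι_apply _ _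

@[simp] theorem lift_t : lift X Y T hXT hYT hr t = T := by
  rw [lift, gen, RingQuot.liftAlgHom_mkAlgHom_apply]
  exact FreeAlgebra.lift_ι_apply _ _

end Lift

section Grading

theorem qPlaneHomogPiece_one :
    qPlaneHomogPiece k q a b c 1 = Submodule.span k (Set.range (gen q a b c)) := by
  rw [qPlaneHomogPiece, pow_one, Submodule.map_span, ← Set.range_comp]
  rfl

theorem qPlaneHomogPiece_eq_pow (n : ℕ) :
    qPlaneHomogPiece k q a b c n = qPlaneHomogPiece k q a b c 1 ^ n := by
  simp only [qPlaneHomogPiece, pow_one, Submodule.map_pow]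

theorem gen_mem_qPlaneHomogPiece_one (i : Fin 3) :
    gen q a b c i ∈ qPlaneHomogPiece k q a b c 1 :=
  qPlaneHomogPiece_one (k := k) ▸ Submodule.subset_span ⟨i, rfl⟩

theorem map_qPlaneHomogPiece_le {f : H →ₐ[k] H} (h₁ : f x₁ ∈ qPlaneHomogPiece k q a b c 1)
    (h₂ : f x₂ ∈ qPlaneHomogPiece k q a b c 1) (ht : f t ∈ qPlaneHomogPiece k q a b c 1) (n : ℕ) :
    Submodule.map f.toLinearMap (qPlaneHomogPiece k q a b c n) ≤ qPlaneHomogPiece k q a b c n := by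
  rw [qPlaneHomogPiece_eq_pow, Submodule.map_pow]
  refine pow_le_pow_left' ?_ n
  rw [qPlaneHomogPiece_one, Submodule.map_span_le]
  rintro _ ⟨i, rfl⟩
  rw [← qPlaneHomogPiece_one]
  fin_cases i <;> assumption

end Grading

def substHom (hq : q ≠ 0) : H →ₐ[k] H :=
  lift (q • x₁ - b • t) (q⁻¹ • x₂ + (q⁻¹ * a) • t) t
    ((commute_x₁_t.smul_left q).sub_left ((Commute.refl _).smul_left b))
    ((commute_x₂_t.smul_left _).add_left ((Commute.refl _).smul_left _))
    ((relator_subst a b c hq commute_x₁_t commute_x₂_t).trans relator_gen)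

def substInvHom (hq : q ≠ 0) : H →ₐ[k] H :=
  lift (q⁻¹ • x₁ + (q⁻¹ * b) • t) (q • x₂ - a • t) t
    ((commute_x₁_t.smul_left _).add_left ((Commute.refl _).smul_left _))
    ((commute_x₂_t.smul_left q).sub_left ((Commute.refl _).smul_left a))
    ((relator_subst_inv a b c hq commute_x₁_t commute_x₂_t).trans
      relator_gen)

variable (hq : q ≠ 0)

@[simp] theorem substHom_x₁ : substHom hq x₁ = q • x₁ - b • t := lift_x₁ ..
@[simp] theorem substHom_x₂ : substHom hq x₂ = q⁻¹ • x₂ + (q⁻¹ * a) • t := lift_x₂ ..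
@[simp] theorem substHom_t : substHom hq t = t := lift_t ..
@[simp] theorem substInvHom_x₁ : substInvHom hq x₁ = q⁻¹ • x₁ + (q⁻¹ * b) • t := lift_x₁ ..
@[simp] theorem substInvHom_x₂ : substInvHom hq x₂ = q • x₂ - a • t := lift_x₂ ..
@[simp] theorem substInvHom_t : substInvHom hq t = t := lift_t ..

def substEquiv : H ≃ₐ[k] H :=
  AlgEquiv.ofAlgHom (substHom hq) (substInvHom hq)
    (hom_ext (by simpa using inv_smul_smul_sub_add_cancel hq b x₁ t)
      (by simpa using smul_inv_smul_add_sub_cancel hq a x₂ t) (by simp))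
    (hom_ext (by simpa using smul_inv_smul_add_sub_cancel hq b x₁ t)
      (by simpa using inv_smul_smul_sub_add_cancel hq a x₂ t) (by simp))

end QPlaneHomog

theorem stmt7_general (k : Type*) [Field k]
    (q a b c : k) (hq0 : q ≠ 0) :
    (∀ h : RingQuot (qPlaneHomogRel k q a b c),
      RingQuot.mkAlgHom k _ (FreeAlgebra.ι k 2) * h =
        h * RingQuot.mkAlgHom k _ (FreeAlgebra.ι k 2)) ∧
    ∃ φ : RingQuot (qPlaneHomogRel k q a b c) ≃ₐ[k] RingQuot (qPlaneHomogRel k q a b c),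
      φ (RingQuot.mkAlgHom k _ (FreeAlgebra.ι k 0)) =
        q • RingQuot.mkAlgHom k _ (FreeAlgebra.ι k 0) -
          b • RingQuot.mkAlgHom k _ (FreeAlgebra.ι k 2) ∧
      φ (RingQuot.mkAlgHom k _ (FreeAlgebra.ι k 1)) =
        q⁻¹ • RingQuot.mkAlgHom k _ (FreeAlgebra.ι k 1) +
          (q⁻¹ * a) • RingQuot.mkAlgHom k _ (FreeAlgebra.ι k 2) ∧
      φ (RingQuot.mkAlgHom k _ (FreeAlgebra.ι k 2)) =
        RingQuot.mkAlgHom k _ (FreeAlgebra.ι k 2) ∧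
      (∀ n, Submodule.map φ.toLinearMap (qPlaneHomogPiece k q a b c n) ≤
        qPlaneHomogPiece k q a b c n) ∧
      (∀ n, Submodule.map φ.symm.toLinearMap (qPlaneHomogPiece k q a b c n) ≤
        qPlaneHomogPiece k q a b c n) := by
  open QPlaneHomog in
  refine ⟨fun h ↦ (commute_t h).eq, substEquiv hq0, substHom_x₁ hq0, substHom_x₂ hq0,
    substHom_t hq0, map_qPlaneHomogPiece_le ?_ ?_ ?_, map_qPlaneHomogPiece_le ?_ ?_ ?_⟩ <;>
  simp only [substHom_x₁, substHom_x₂, substHom_t, substInvHom_x₁, substInvHom_x₂,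
    substInvHom_t] <;>
  apply_rules [Submodule.add_mem, Submodule.sub_mem, Submodule.smul_mem,
    gen_mem_qPlaneHomogPiece_one]

/-- in the homogenization `H` of `U = k⟨x₁,x₂⟩/(x₁x₂ − qx₂x₁ + ax₁ + bx₂ + c)`,
the element `t` is central, and `x₁ ↦ qx₁ − bt`, `x₂ ↦ q⁻¹x₂ + q⁻¹at`, `t ↦ t` extends to a
graded algebra automorphism of `H`. -/
theorem stmt7 (k : Type*) [Field k] [IsAlgClosed k] [CharZero k]
    (q a b c : k) (hq0 : q ≠ 0) (hq1 : q ≠ 1) :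
    (∀ h : RingQuot (qPlaneHomogRel k q a b c),
      RingQuot.mkAlgHom k _ (FreeAlgebra.ι k 2) * h =
        h * RingQuot.mkAlgHom k _ (FreeAlgebra.ι k 2)) ∧
    ∃ φ : RingQuot (qPlaneHomogRel k q a b c) ≃ₐ[k] RingQuot (qPlaneHomogRel k q a b c),
      φ (RingQuot.mkAlgHom k _ (FreeAlgebra.ι k 0)) =
        q • RingQuot.mkAlgHom k _ (FreeAlgebra.ι k 0) -
          b • RingQuot.mkAlgHom k _ (FreeAlgebra.ι k 2) ∧
      φ (RingQuot.mkAlgHom k _ (FreeAlgebra.ι k 1)) =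
        q⁻¹ • RingQuot.mkAlgHom k _ (FreeAlgebra.ι k 1) +
          (q⁻¹ * a) • RingQuot.mkAlgHom k _ (FreeAlgebra.ι k 2) ∧
      φ (RingQuot.mkAlgHom k _ (FreeAlgebra.ι k 2)) =
        RingQuot.mkAlgHom k _ (FreeAlgebra.ι k 2) ∧
      (∀ n, Submodule.map φ.toLinearMap (qPlaneHomogPiece k q a b c n) ≤
        qPlaneHomogPiece k q a b c n) ∧
      (∀ n, Submodule.map φ.symm.toLinearMap (qPlaneHomogPiece k q a b c n) ≤
        qPlaneHomogPiece k q a b c n) :=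
  stmt7_general k q a b c hq0
end

section
/- In the algebra 𝔅 = k⟨x₁,x₂⟩/(x₁²x₂ − x₂x₁² − x₂x₁x₂ + x₂²x₁, x₁x₂² − x₂²x₁), the element z = x₁x₂ − x₂x₁ is normal (i.e., z𝔅 = 𝔅z), and 𝔅/(z) is isomorphic to the polynomial ring k[x₁,x₂]. -/
/-- The defining relations of the algebra `𝔅`:
`x₁²x₂ − x₂x₁² − x₂x₁x₂ + x₂²x₁ = 0` and `x₁x₂² − x₂²x₁ = 0`. -/
def frakBRel (k : Type*) [Field k] :
    FreeAlgebra k (Fin 2) → FreeAlgebra k (Fin 2) → Prop := fun u v =>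
  (u = FreeAlgebra.ι k 0 * FreeAlgebra.ι k 0 * FreeAlgebra.ι k 1 -
        FreeAlgebra.ι k 1 * FreeAlgebra.ι k 0 * FreeAlgebra.ι k 0 -
        FreeAlgebra.ι k 1 * FreeAlgebra.ι k 0 * FreeAlgebra.ι k 1 +
        FreeAlgebra.ι k 1 * FreeAlgebra.ι k 1 * FreeAlgebra.ι k 0 ∧ v = 0) ∨
  (u = FreeAlgebra.ι k 0 * FreeAlgebra.ι k 1 * FreeAlgebra.ι k 1 -
        FreeAlgebra.ι k 1 * FreeAlgebra.ι k 1 * FreeAlgebra.ι k 0 ∧ v = 0)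

/-- The algebra `𝔅 = k⟨x₁,x₂⟩/(x₁²x₂ − x₂x₁² − x₂x₁x₂ + x₂²x₁, x₁x₂² − x₂²x₁)`. -/
abbrev FrakB (k : Type*) [Field k] := RingQuot (frakBRel k)

/-- The image of `z = x₁x₂ − x₂x₁` in `𝔅`. -/
noncomputable def frakBz (k : Type*) [Field k] : FrakB k :=
  RingQuot.mkAlgHom k (frakBRel k)
    (FreeAlgebra.ι k 0 * FreeAlgebra.ι k 1 - FreeAlgebra.ι k 1 * FreeAlgebra.ι k 0)

/-- The relation killing `z` in `𝔅`, defining the quotient `𝔅/(z)`. -/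
def frakBzRel (k : Type*) [Field k] : FrakB k → FrakB k → Prop := fun u v =>
  u = frakBz k ∧ v = 0

/-!
On generators the defining relations give
`z x₁ = (x₂ − x₁) z`, `z x₂ = −x₂ z`, `x₁ z = z (−x₁ − x₂)` and `x₂ z = z (−x₂)`.
Since `{b | z b ∈ 𝔅 z}` and `{b | b z ∈ z 𝔅}` are subalgebras, they are all of `𝔅`.
Modulo `z` the generators commute, so `𝔅/(z)` is commutative; both defining relations hold in
`k[x₁,x₂]`, hence `xᵢ ↦ xᵢ` defines mutually inverse maps between `𝔅/(z)` and `k[x₁,x₂]`.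
-/

section Generation

variable {R A B : Type*} [CommSemiring R] [Semiring A] [Semiring B] [Algebra R A] [Algebra R B]

theorem Algebra.adjoin_image_eq_top_of_surjective {s : Set A} (hs : Algebra.adjoin R s = ⊤)
    (f : A →ₐ[R] B) (hf : Function.Surjective f) : Algebra.adjoin R (f '' s) = ⊤ := by
  rw [Algebra.adjoin_image, hs, Algebra.map_top, AlgHom.range_eq_top]
  exact hf

theorem Algebra.commute_of_adjoin_eq_top {s : Set A} (hs : Algebra.adjoin R s = ⊤)
    (hcomm : ∀ a ∈ s, ∀ b ∈ s, Commute a b) (a b : A) : Commute a b := by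
  have hsa : ∀ c ∈ s, Commute c a := fun c hc =>
    Algebra.commute_of_mem_adjoin_of_forall_mem_commute (hs ▸ Algebra.mem_top) (hcomm c hc)
  exact Algebra.commute_of_mem_adjoin_of_forall_mem_commute (hs ▸ Algebra.mem_top)
    fun c hc => (hsa c hc).symm

theorem Algebra.exists_mul_eq_mul_left_of_adjoin_eq_top {s : Set A}
    (hs : Algebra.adjoin R s = ⊤) {z : A} (h : ∀ a ∈ s, ∃ c, z * a = c * z) (b : A) :
    ∃ c, z * b = c * z := by
  induction (hs ▸ Algebra.mem_top : b ∈ Algebra.adjoin R s) using Algebra.adjoin_induction with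
  | mem a ha => exact h a ha
  | algebraMap r => exact ⟨algebraMap R A r, (Algebra.commutes r z).symm⟩
  | add a b _ _ ha hb =>
    obtain ⟨c, hc⟩ := ha
    obtain ⟨d, hd⟩ := hb
    exact ⟨c + d, by rw [mul_add, hc, hd, add_mul]⟩
  | mul a b _ _ ha hb =>
    obtain ⟨c, hc⟩ := ha
    obtain ⟨d, hd⟩ := hb
    exact ⟨c * d, by rw [← mul_assoc, hc, mul_assoc, hd, mul_assoc]⟩

theorem Algebra.exists_mul_eq_mul_right_of_adjoin_eq_top {s : Set A}
    (hs : Algebra.adjoin R s = ⊤) {z : A} (h : ∀ a ∈ s, ∃ c, a * z = z * c) (b : A) :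
    ∃ c, b * z = z * c := by
  induction (hs ▸ Algebra.mem_top : b ∈ Algebra.adjoin R s) using Algebra.adjoin_induction with
  | mem a ha => exact h a ha
  | algebraMap r => exact ⟨algebraMap R A r, Algebra.commutes r z⟩
  | add a b _ _ ha hb =>
    obtain ⟨c, hc⟩ := ha
    obtain ⟨d, hd⟩ := hb
    exact ⟨c + d, by rw [add_mul, hc, hd, mul_add]⟩
  | mul a b _ _ ha hb =>
    obtain ⟨c, hc⟩ := ha
    obtain ⟨d, hd⟩ := hb
    exact ⟨c * d, by rw [mul_assoc, hd, ← mul_assoc, hc, mul_assoc]⟩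

end Generation

section Commutator

variable {R : Type*} [Ring R] {a b : R}

theorem commutator_mul_fst (h₁ : a * a * b - b * a * a - b * a * b + b * b * a = 0) :
    (a * b - b * a) * a = (b - a) * (a * b - b * a) := by
  rw [← sub_eq_zero, ← h₁]
  noncomm_ring

theorem commutator_mul_snd (h₂ : Commute a (b * b)) :
    (a * b - b * a) * b = -b * (a * b - b * a) := by
  rw [← sub_eq_zero, ← sub_eq_zero.mpr h₂.eq]
  noncomm_ring

theorem fst_mul_commutator (h₁ : a * a * b - b * a * a - b * a * b + b * b * a = 0)
    (h₂ : Commute a (b * b)) : a * (a * b - b * a) = (a * b - b * a) * -(a + b) := by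
  rw [← sub_eq_zero]
  calc _ = (a * a * b - b * a * a - b * a * b + b * b * a) + (a * (b * b) - b * b * a) := by
        noncomm_ring
    _ = 0 := by rw [h₁, sub_eq_zero.mpr h₂.eq, add_zero]

theorem snd_mul_commutator (h₂ : Commute a (b * b)) :
    b * (a * b - b * a) = (a * b - b * a) * -b := by
  rw [← sub_eq_zero, ← sub_eq_zero.mpr h₂.eq]
  noncomm_ring

end Commutator

namespace FrakB

variable (k : Type*) [Field k]

-- `x k 0` and `x k 1` are the paper's `x₁` and `x₂`.
noncomputable def x (i : Fin 2) : FrakB k :=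
  RingQuot.mkAlgHom k (frakBRel k) (FreeAlgebra.ι k i)

theorem adjoin_range_x : Algebra.adjoin k (Set.range (x k)) = ⊤ := by
  change Algebra.adjoin k (Set.range (RingQuot.mkAlgHom k (frakBRel k) ∘ FreeAlgebra.ι k)) = ⊤
  rw [Set.range_comp]
  exact Algebra.adjoin_image_eq_top_of_surjective (FreeAlgebra.adjoin_range_ι k (Fin 2)) _
    (RingQuot.mkAlgHom_surjective k _)

theorem frakBz_eq : frakBz k = x k 0 * x k 1 - x k 1 * x k 0 := by
  simp only [frakBz, x, map_sub, map_mul]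

theorem cubic_rel :
    x k 0 * x k 0 * x k 1 - x k 1 * x k 0 * x k 0 - x k 1 * x k 0 * x k 1
      + x k 1 * x k 1 * x k 0 = 0 := by
  simpa only [x, map_sub, map_add, map_mul, map_zero] using
    RingQuot.mkAlgHom_rel k (s := frakBRel k) (Or.inl ⟨rfl, rfl⟩)

theorem commute_x_zero_x_one_sq : Commute (x k 0) (x k 1 * x k 1) := by
  have h := RingQuot.mkAlgHom_rel k (s := frakBRel k) (Or.inr ⟨rfl, rfl⟩)
  simp only [map_sub, map_mul, map_zero] at h
  rw [Commute, SemiconjBy, ← mul_assoc]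
  exact sub_eq_zero.mp h

theorem exists_frakBz_mul_eq (b : FrakB k) : ∃ c, frakBz k * b = c * frakBz k := by
  refine Algebra.exists_mul_eq_mul_left_of_adjoin_eq_top (adjoin_range_x k) ?_ b
  simp only [Set.forall_mem_range, Fin.forall_fin_two, frakBz_eq]
  exact ⟨⟨_, commutator_mul_fst (cubic_rel k)⟩,
    ⟨_, commutator_mul_snd (commute_x_zero_x_one_sq k)⟩⟩

theorem exists_mul_frakBz_eq (b : FrakB k) : ∃ c, b * frakBz k = frakBz k * c := by
  refine Algebra.exists_mul_eq_mul_right_of_adjoin_eq_top (adjoin_range_x k) ?_ b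
  simp only [Set.forall_mem_range, Fin.forall_fin_two, frakBz_eq]
  exact ⟨⟨_, fst_mul_commutator (cubic_rel k) (commute_x_zero_x_one_sq k)⟩,
    ⟨_, snd_mul_commutator (commute_x_zero_x_one_sq k)⟩⟩

noncomputable def xBar (i : Fin 2) : RingQuot (frakBzRel k) :=
  RingQuot.mkAlgHom k (frakBzRel k) (x k i)

theorem adjoin_range_xBar : Algebra.adjoin k (Set.range (xBar k)) = ⊤ := by
  change Algebra.adjoin k (Set.range (RingQuot.mkAlgHom k (frakBzRel k) ∘ x k)) = ⊤
  rw [Set.range_comp]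
  exact Algebra.adjoin_image_eq_top_of_surjective (adjoin_range_x k) _
    (RingQuot.mkAlgHom_surjective k _)

theorem commute_xBar : Commute (xBar k 0) (xBar k 1) := by
  have h := RingQuot.mkAlgHom_rel k (s := frakBzRel k) ⟨rfl, rfl⟩
  rw [map_zero, frakBz_eq, map_sub, map_mul, map_mul] at h
  exact sub_eq_zero.mp h

noncomputable instance : CommRing (RingQuot (frakBzRel k)) where
  mul_comm := Algebra.commute_of_adjoin_eq_top (adjoin_range_xBar k) <| by
    simp only [Set.forall_mem_range, Fin.forall_fin_two, Commute.refl, commute_xBar,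
      (commute_xBar k).symm, and_self]

noncomputable def toMvPolynomial : FrakB k →ₐ[k] MvPolynomial (Fin 2) k :=
  RingQuot.liftAlgHom k ⟨FreeAlgebra.lift k MvPolynomial.X, by
    rintro _ _ (⟨rfl, rfl⟩ | ⟨rfl, rfl⟩) <;>
      simp only [map_sub, map_add, map_mul, map_zero, FreeAlgebra.lift_ι_apply] <;> ring⟩

theorem toMvPolynomial_x (i : Fin 2) : toMvPolynomial k (x k i) = MvPolynomial.X i := by
  rw [toMvPolynomial, x, RingQuot.liftAlgHom_mkAlgHom_apply, FreeAlgebra.lift_ι_apply]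

noncomputable def quotToMvPolynomial : RingQuot (frakBzRel k) →ₐ[k] MvPolynomial (Fin 2) k :=
  RingQuot.liftAlgHom k ⟨toMvPolynomial k, by
    rintro _ _ ⟨rfl, rfl⟩
    rw [frakBz_eq, map_sub, map_mul, map_mul, toMvPolynomial_x, toMvPolynomial_x, map_zero]
    ring⟩

theorem quotToMvPolynomial_xBar (i : Fin 2) :
    quotToMvPolynomial k (xBar k i) = MvPolynomial.X i := by
  rw [quotToMvPolynomial, xBar, RingQuot.liftAlgHom_mkAlgHom_apply, toMvPolynomial_x]

noncomputable def quotEquivMvPolynomial :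
    RingQuot (frakBzRel k) ≃ₐ[k] MvPolynomial (Fin 2) k :=
  AlgEquiv.ofAlgHom (quotToMvPolynomial k) (MvPolynomial.aeval (xBar k))
    (MvPolynomial.algHom_ext fun i => by
      rw [AlgHom.comp_apply, MvPolynomial.aeval_X, quotToMvPolynomial_xBar, AlgHom.id_apply])
    (AlgHom.ext_of_adjoin_eq_top (adjoin_range_xBar k) <| by
      rintro _ ⟨i, rfl⟩
      rw [AlgHom.comp_apply, quotToMvPolynomial_xBar, MvPolynomial.aeval_X, AlgHom.id_apply])

end FrakB

theorem stmt11_general (k : Type*) [Field k] :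
    ((∀ b : FrakB k, ∃ c : FrakB k, frakBz k * b = c * frakBz k) ∧
     (∀ b : FrakB k, ∃ c : FrakB k, b * frakBz k = frakBz k * c)) ∧
    Nonempty (RingQuot (frakBzRel k) ≃ₐ[k] MvPolynomial (Fin 2) k) :=
  ⟨⟨FrakB.exists_frakBz_mul_eq k, FrakB.exists_mul_frakBz_eq k⟩,
    ⟨FrakB.quotEquivMvPolynomial k⟩⟩

/-- in `𝔅`, the element `z = x₁x₂ − x₂x₁` is normal (`z𝔅 = 𝔅z`),
and `𝔅/(z)` is isomorphic to the polynomial ring `k[x₁,x₂]`. -/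
theorem stmt11 (k : Type*) [Field k] [IsAlgClosed k] [CharZero k] :
    ((∀ b : FrakB k, ∃ c : FrakB k, frakBz k * b = c * frakBz k) ∧
     (∀ b : FrakB k, ∃ c : FrakB k, b * frakBz k = frakBz k * c)) ∧
    Nonempty (RingQuot (frakBzRel k) ≃ₐ[k] MvPolynomial (Fin 2) k) :=
  stmt11_general k
end
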